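/- Let K be a field and F = {f_1,...,f_s} polynomials in (K[x_1])[x_2,...,x_n], none in K[x_1], all having the same leading monomial x̃^α. If f = f_1 + ... + f_s satisfies lm(f) ≺ x̃^α, then there exist nonzero multipliers b, b_1,...,b_{s−1} ∈ K[x_1] such that b·f = Σ_{j=1}^{s−1} b_j·S(f_j, f_s). Concretely one may take m_j = lcm(lc(f_j), lc(f_s)), b = lcm_{1≤j<s}(m_j/lc(f_j)), and b_j = b·lc(f_j)/m_j. -/

import Mathlib

open MvPolynomial

/-- The leading monomial (exponent) of `f` with respect to the monomial order `m`,
taken over the coefficient ring. -/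
noncomputable def mdeg {σ : Type*} (m : MonomialOrder σ) {R : Type*} [CommSemiring R]
    (f : MvPolynomial σ R) : σ →₀ ℕ :=
  m.toSyn.symm (f.support.sup fun d => m.toSyn d)

/-- The leading coefficient of `f` with respect to the monomial order `m`. -/
noncomputable def lC {σ : Type*} (m : MonomialOrder σ) {R : Type*} [CommSemiring R]
    (f : MvPolynomial σ R) : R :=
  f.coeff (mdeg m f)

/-- The leading term of `f` with respect to the monomial order `m`. -/
noncomputable def lT {σ : Type*} (m : MonomialOrder σ) {R : Type*} [CommSemiring R]
    (f : MvPolynomial σ R) : MvPolynomial σ R :=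
  monomial (mdeg m f) (lC m f)

/-- `d` is a greatest common divisor of `a` and `b` (gcd's are unique up to units). -/
def IsGcd {α : Type*} [CommMonoid α] (d a b : α) : Prop :=
  d ∣ a ∧ d ∣ b ∧ ∀ e, e ∣ a → e ∣ b → e ∣ d

/-- `l` is a least common multiple of `a` and `b` (lcm's are unique up to units). -/
def IsLcm {α : Type*} [CommMonoid α] (l a b : α) : Prop :=
  a ∣ l ∧ b ∣ l ∧ ∀ e, a ∣ e → b ∣ e → l ∣ e

/-!
The coefficient of `x̃^α` in `f_j` is its leading coefficient `c_j`, and these cancel in the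
sum: `∑ c_j = 0`. With `m_j = c_j u_j = c_{s+1} v_j` we have
`S(f_j, f_{s+1}) = u_j f_j - v_j f_{s+1}`. Writing `b = b_j u_j` gives
`b_j v_j c_{s+1} = b_j m_j = b c_j`; summing over `j ≤ s` and cancelling `c_{s+1} ≠ 0` yields
`∑ b_j v_j = -b`, hence `∑ b_j S(f_j, f_{s+1}) = b ∑_{j ≤ s} f_j - (∑ b_j v_j) f_{s+1} = b f`.
-/

open MvPolynomial

section LeadingTerms

variable {σ R : Type*} [CommSemiring R] (m : MonomialOrder σ)

lemma lC_ne_zero {f : MvPolynomial σ R} (hf : f ≠ 0) : lC m f ≠ 0 :=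
  m.leadingCoeff_ne_zero_iff.mpr hf

lemma sum_lC_eq_zero_of_mdeg_sum_lt {ι : Type*} [Fintype ι] (f : ι → MvPolynomial σ R)
    {α : σ →₀ ℕ} (hα : ∀ j, mdeg m (f j) = α) (hlt : m.toSyn (mdeg m (∑ j, f j)) < m.toSyn α) :
    ∑ j, lC m (f j) = 0 := by
  have hcoeff : (∑ j, f j).coeff α = 0 := MonomialOrder.coeff_eq_zero_of_lt hlt
  rw [coeff_sum] at hcoeff
  simpa only [lC, hα] using hcoeff

end LeadingTerms

lemma IsLcm.ne_zero {α : Type*} [CommMonoidWithZero α] [NoZeroDivisors α] {l a b : α}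
    (h : IsLcm l a b) (ha : a ≠ 0) (hb : b ≠ 0) : l ≠ 0 := by
  rintro rfl
  exact mul_ne_zero ha hb (zero_dvd_iff.mp (h.2.2 _ (dvd_mul_right a b) (dvd_mul_left b a)))

section Cofactors

variable {R : Type*} [CommRing R] {s : ℕ}

lemma sum_mul_cofactor_eq_neg [IsDomain R] {c : Fin (s + 1) → R} (hc : ∑ j, c j = 0)
    (hlast : c (Fin.last s) ≠ 0) {b : R} {bs v : Fin s → R}
    (hcof : ∀ j, b * c j.castSucc = bs j * (c (Fin.last s) * v j)) :
    ∑ j, bs j * v j = -b := by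
  apply mul_right_cancel₀ hlast
  have hinit : ∑ j : Fin s, c j.castSucc = -c (Fin.last s) := by
    rw [Fin.sum_univ_castSucc] at hc
    linear_combination hc
  calc (∑ j, bs j * v j) * c (Fin.last s)
      = b * ∑ j : Fin s, c j.castSucc := by
        rw [Finset.sum_mul, Finset.mul_sum]
        exact Finset.sum_congr rfl fun j _ => by rw [hcof j]; ring
    _ = -b * c (Fin.last s) := by rw [hinit]; ring

lemma map_mul_sum_eq_sum_cofactor {A : Type*} [CommRing A] (φ : R →+* A)
    (f : Fin (s + 1) → A) {b : R} {bs u v : Fin s → R} (hbu : ∀ j, bs j * u j = b)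
    (hbv : ∑ j, bs j * v j = -b) :
    φ b * ∑ j, f j = ∑ j, φ (bs j) * (φ (u j) * f j.castSucc - φ (v j) * f (Fin.last s)) := by
  calc φ b * ∑ j, f j
      = ∑ j : Fin s, φ b * f j.castSucc - φ (∑ j, bs j * v j) * f (Fin.last s) := by
        rw [Fin.sum_univ_castSucc, mul_add, Finset.mul_sum, hbv, map_neg]; ring
    _ = ∑ j, φ (bs j) * (φ (u j) * f j.castSucc - φ (v j) * f (Fin.last s)) := by
        rw [map_sum, Finset.sum_mul, ← Finset.sum_sub_distrib]
        exact Finset.sum_congr rfl fun j _ => by rw [← hbu j, map_mul, map_mul]; ring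

end Cofactors

/-- **Syzygy lemma over `K[x₁]`.**  If `f_1, …, f_{s+1} ∉ K[x₁]` all have leading
monomial `x̃^α` and `f = f_1 + ⋯ + f_{s+1}` has `lm f ≺ x̃^α`, then there are nonzero
`b, b_1, …, b_s ∈ K[x₁]` with `b·f = ∑_j b_j·S(f_j, f_{s+1})`.  Concretely, with
`m_j = lcm(lc f_j, lc f_{s+1}) = lc f_j·u_j`, one may take `b = lcm_j(u_j)` and
`b_j = b·lc f_j/m_j` (i.e. `b·lc f_j = b_j·m_j`). -/
theorem syzygy_lemma {σ K : Type*} [Field K] (m : MonomialOrder σ) (s : ℕ)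
    (f : Fin (s + 1) → MvPolynomial σ (Polynomial K))
    (hfR : ∀ j, f j ∉ Set.range (C : Polynomial K → MvPolynomial σ (Polynomial K)))
    (α : σ →₀ ℕ) (hα : ∀ j, mdeg m (f j) = α)
    (hlt : m.toSyn (mdeg m (∑ j, f j)) < m.toSyn α)
    (M u v : Fin s → Polynomial K)
    (hM : ∀ j, IsLcm (M j) (lC m (f j.castSucc)) (lC m (f (Fin.last s))))
    (hu : ∀ j, M j = lC m (f j.castSucc) * u j)
    (hv : ∀ j, M j = lC m (f (Fin.last s)) * v j) :
    ∃ (b : Polynomial K) (bs : Fin s → Polynomial K),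
      b ≠ 0 ∧ (∀ j, bs j ≠ 0) ∧
      C b * (∑ j, f j) =
        ∑ j, C (bs j) * (C (u j) * f j.castSucc - C (v j) * f (Fin.last s)) ∧
      (∀ j, u j ∣ b) ∧ (∀ e, (∀ j, u j ∣ e) → b ∣ e) ∧
      (∀ j, b * lC m (f j.castSucc) = bs j * M j) := by
  -- `K[X]` has no global `NormalizedGCDMonoid` instance; any normalization will do, since the
  -- lcm is only asked for up to units.
  let := UniqueFactorizationMonoid.strongNormalizationMonoid (α := Polynomial K)
  let := UniqueFactorizationMonoid.toNormalizedGCDMonoid (Polynomial K)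
  have hc0 : ∀ j, lC m (f j) ≠ 0 := fun j => lC_ne_zero m fun h => hfR j ⟨0, by simp [h]⟩
  have hu0 : ∀ j, u j ≠ 0 := fun j huj =>
    (hM j).ne_zero (hc0 _) (hc0 _) (by rw [hu j, huj, mul_zero])
  set b := Finset.univ.lcm u
  have hub : ∀ j, u j ∣ b := fun j => Finset.dvd_lcm (Finset.mem_univ j)
  have hb0 : b ≠ 0 := fun hb => by
    obtain ⟨j, -, hj⟩ := Finset.lcm_eq_zero_iff.mp hb
    exact hu0 j hj
  choose bs hbs using hub
  have hbu : ∀ j, bs j * u j = b := fun j => by rw [hbs j, mul_comm]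
  have hcof : ∀ j, b * lC m (f j.castSucc) = bs j * M j := fun j => by
    rw [hu j, ← hbu j]; ring
  have hbv : ∑ j, bs j * v j = -b :=
    sum_mul_cofactor_eq_neg (sum_lC_eq_zero_of_mdeg_sum_lt m f hα hlt) (hc0 _)
      fun j => by rw [hcof j, hv j]
  refine ⟨b, bs, hb0, fun j hj => hb0 (by rw [← hbu j, hj, zero_mul]),
    map_mul_sum_eq_sum_cofactor C f hbu hbv, fun j => ⟨bs j, hbs j⟩,
    fun e he => Finset.lcm_dvd fun j _ => he j, hcof⟩
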